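/- (Generalized equal area principle.) Let F : ℝ → ℝ be C², let u : ℝ → ℝ be C¹, and define x(s,t) = s + F'(u(s))·t. Let s₀, s₁ be C¹ functions of t on an open interval I with x(s₀(t),t) = x(s₁(t),t) and u(s₀(t)) ≠ u(s₁(t)) for all t ∈ I, and define A(t) = ∫_{s₀(t)}^{s₁(t)} u(s)·∂_s x(s,t) ds. Then for each t ∈ I, A'(t) = 0 if and only if d/dt x(s₀(t),t) = (F(u(s₀(t))) − F(u(s₁(t)))) / (u(s₀(t)) − u(s₁(t))). In particular, the vertical line of zero signed parametric area through the multivalued region moves at the speed given by the Rankine–Hugoniot condition. -/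

import Mathlib

/-!
The integrand `u(s)·∂ₛx(s,t) = u(s)·(1 + ∂ₛ[F'(u(s))]·t)` has the explicit primitive
`Φ(σ,t) = ∫₀^σ u + t·(u(σ)F'(u(σ)) − F(u(σ)))`, because `∂ₛ(u F'(u) − F(u)) = u·∂ₛ[F'(u)]`.
Along any differentiable path `s(t)` the chain rule gives `d/dt Φ(s(t),t) = u(s)·ẋ − F(u(s))`,
where `ẋ` is the speed of `x(s(t),t)`. Both endpoints lie on the same vertical line, so they
share `ẋ`, and `A' = (u₁ − u₀)·ẋ − (F(u₁) − F(u₀))`, which vanishes exactly at the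
Rankine–Hugoniot speed.
-/

open MeasureTheory Set

/-- The characteristic flow `x(s,t) = s + F'(u(s))·t`. -/
noncomputable def flowX (F u : ℝ → ℝ) (s t : ℝ) : ℝ :=
  s + deriv F (u s) * t

/-- The parametric area `A = ∫_{s₀}^{s₁} u(s)·∂_s x(s,t) ds`. -/
noncomputable def parArea (F u : ℝ → ℝ) (s₀ s₁ t : ℝ) : ℝ :=
  ∫ s in s₀..s₁, u s * deriv (fun r => flowX F u r t) s

open Filter Topology

namespace EqualArea

variable {F u : ℝ → ℝ}

theorem contDiff_deriv_comp (hF : ContDiff ℝ 2 F) (hu : ContDiff ℝ 1 u) :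
    ContDiff ℝ 1 (fun r => deriv F (u r)) :=
  (hF.deriv' (n := 1)).comp hu

theorem hasDerivAt_flowX_fst {s : ℝ} (t : ℝ)
    (hw : DifferentiableAt ℝ (fun r => deriv F (u r)) s) :
    HasDerivAt (fun r => flowX F u r t) (1 + deriv (fun r => deriv F (u r)) s * t) s :=
  (hasDerivAt_id s).add (hw.hasDerivAt.mul_const t)

theorem hasDerivAt_flowX_comp {s : ℝ → ℝ} {p t : ℝ}
    (hw : DifferentiableAt ℝ (fun r => deriv F (u r)) (s t)) (hs : HasDerivAt s p t) :
    HasDerivAt (fun τ => flowX F u (s τ) τ)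
      (p * (1 + deriv (fun r => deriv F (u r)) (s t) * t) + deriv F (u (s t))) t := by
  have hw' := (hw.hasDerivAt.comp t hs).mul (hasDerivAt_id t)
  refine (hs.add hw').congr_deriv ?_
  simp only [Function.comp_apply, id]
  ring

noncomputable def areaPrimitive (F u : ℝ → ℝ) (σ τ : ℝ) : ℝ :=
  (∫ r in (0 : ℝ)..σ, u r) + τ * (u σ * deriv F (u σ) - F (u σ))

theorem hasDerivAt_mul_deriv_sub_comp (hF : ContDiff ℝ 2 F) (hu : ContDiff ℝ 1 u) (σ : ℝ) :
    HasDerivAt (fun r => u r * deriv F (u r) - F (u r))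
      (u σ * deriv (fun r => deriv F (u r)) σ) σ := by
  have hu' : HasDerivAt u (deriv u σ) σ := (hu.differentiable one_ne_zero σ).hasDerivAt
  have hw : HasDerivAt (fun r => deriv F (u r)) (deriv (fun r => deriv F (u r)) σ) σ :=
    ((contDiff_deriv_comp hF hu).differentiable one_ne_zero σ).hasDerivAt
  have hFu : HasDerivAt (fun r => F (u r)) (deriv F (u σ) * deriv u σ) σ :=
    (hF.differentiable two_ne_zero (u σ)).hasDerivAt.comp σ hu'
  refine ((hu'.mul hw).sub hFu).congr_deriv ?_
  ring

theorem hasDerivAt_areaPrimitive_fst (hF : ContDiff ℝ 2 F) (hu : ContDiff ℝ 1 u) (σ τ : ℝ) :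
    HasDerivAt (fun σ => areaPrimitive F u σ τ)
      (u σ * (1 + deriv (fun r => deriv F (u r)) σ * τ)) σ := by
  have hV := (hu.continuous.integral_hasStrictDerivAt 0 σ).hasDerivAt
  refine (hV.add ((hasDerivAt_mul_deriv_sub_comp hF hu σ).const_mul τ)).congr_deriv ?_
  ring

theorem parArea_eq_sub (hF : ContDiff ℝ 2 F) (hu : ContDiff ℝ 1 u) (σ₀ σ₁ τ : ℝ) :
    parArea F u σ₀ σ₁ τ = areaPrimitive F u σ₁ τ - areaPrimitive F u σ₀ τ := by
  have hw := contDiff_deriv_comp hF hu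
  have hxs : ∀ s, deriv (fun r => flowX F u r τ) s
      = 1 + deriv (fun r => deriv F (u r)) s * τ := fun s =>
    (hasDerivAt_flowX_fst τ (hw.differentiable one_ne_zero s)).deriv
  have hcont : Continuous fun s => u s * (1 + deriv (fun r => deriv F (u r)) s * τ) :=
    hu.continuous.mul (continuous_const.add ((hw.continuous_deriv le_rfl).mul continuous_const))
  simp only [parArea, hxs]
  exact intervalIntegral.integral_eq_sub_of_hasDerivAt
    (fun σ _ => hasDerivAt_areaPrimitive_fst hF hu σ τ) (hcont.intervalIntegrable _ _)

theorem hasDerivAt_areaPrimitive_comp (hF : ContDiff ℝ 2 F) (hu : ContDiff ℝ 1 u)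
    {s : ℝ → ℝ} {p t X : ℝ} (hs : HasDerivAt s p t)
    (hX : HasDerivAt (fun τ => flowX F u (s τ) τ) X t) :
    HasDerivAt (fun τ => areaPrimitive F u (s τ) τ) (u (s t) * X - F (u (s t))) t := by
  have hw := (contDiff_deriv_comp hF hu).differentiable one_ne_zero (s t)
  rw [hX.unique (hasDerivAt_flowX_comp hw hs)]
  have hV := (hu.continuous.integral_hasStrictDerivAt 0 (s t)).hasDerivAt.comp t hs
  have hG := (hasDerivAt_id t).mul ((hasDerivAt_mul_deriv_sub_comp hF hu (s t)).comp t hs)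
  refine (hV.add hG).congr_deriv ?_
  simp only [Function.comp_apply, id]
  ring

end EqualArea

open EqualArea in
/-- **Generalized equal area principle.** The parametric area is stationary
exactly when the common vertical line moves at the Rankine–Hugoniot speed. -/
theorem generalized_equal_area_principle
    (F u : ℝ → ℝ) (hF : ContDiff ℝ 2 F) (hu : ContDiff ℝ 1 u)
    (a b : ℝ) (s₀ s₁ : ℝ → ℝ)
    (hs₀ : ContDiffOn ℝ 1 s₀ (Ioo a b)) (hs₁ : ContDiffOn ℝ 1 s₁ (Ioo a b))
    (hline : ∀ t ∈ Ioo a b, flowX F u (s₀ t) t = flowX F u (s₁ t) t)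
    (hne : ∀ t ∈ Ioo a b, u (s₀ t) ≠ u (s₁ t)) :
    ∀ t ∈ Ioo a b,
      (deriv (fun τ => parArea F u (s₀ τ) (s₁ τ) τ) t = 0 ↔
        deriv (fun τ => flowX F u (s₀ τ) τ) t =
          (F (u (s₀ t)) - F (u (s₁ t))) / (u (s₀ t) - u (s₁ t))) := by
  intro t ht
  have hnhds : Ioo a b ∈ 𝓝 t := isOpen_Ioo.mem_nhds ht
  have hs₀' := ((hs₀.differentiableOn one_ne_zero t ht).differentiableAt hnhds).hasDerivAt
  have hs₁' := ((hs₁.differentiableOn one_ne_zero t ht).differentiableAt hnhds).hasDerivAt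
  set X := deriv (fun τ => flowX F u (s₀ τ) τ) t
  have hX₀ : HasDerivAt (fun τ => flowX F u (s₀ τ) τ) X t :=
    (hasDerivAt_flowX_comp
      ((contDiff_deriv_comp hF hu).differentiable one_ne_zero _) hs₀').differentiableAt.hasDerivAt
  have hX₁ : HasDerivAt (fun τ => flowX F u (s₁ τ) τ) X t :=
    hX₀.congr_of_eventuallyEq (eventually_of_mem hnhds fun τ hτ => (hline τ hτ).symm)
  have hA : HasDerivAt (fun τ => parArea F u (s₀ τ) (s₁ τ) τ)
      ((u (s₁ t) * X - F (u (s₁ t))) - (u (s₀ t) * X - F (u (s₀ t)))) t := by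
    simp only [parArea_eq_sub hF hu]
    exact (hasDerivAt_areaPrimitive_comp hF hu hs₁' hX₁).sub
      (hasDerivAt_areaPrimitive_comp hF hu hs₀' hX₀)
  rw [hA.deriv, eq_div_iff (sub_ne_zero.mpr (hne t ht))]
  constructor <;> intro h <;> linarith
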